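/- arXiv:2106.13154 — 12 statements merged into one kernel-verified Lean document; each statement's English description precedes it below -/
import Mathlib

section
/- A relation ρ on a finite set is essential (i.e., cannot be represented as a conjunction of relations of smaller arity) if and only if there exists an essential tuple for ρ, i.e., a tuple (a₁,…,aₙ) ∉ ρ such that for every coordinate i there exists b with (a₁,…,a_{i-1},b,a_{i+1},…,aₙ) ∈ ρ. -/
/-- A relation `ρ` on a finite set is *essential* (i.e. differs from the conjunction
`ρ̃` of its one-coordinate projections) iff there exists an *essential tuple* for `ρ`:
a tuple not in `ρ` that can be placed into `ρ` by changing any single coordinate. -/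
theorem essential_iff_essential_tuple (A : Type) [Fintype A] (n : ℕ)
    (ρ : Set (Fin n → A)) :
    ρ ≠ {x : Fin n → A | ∀ i : Fin n, ∃ y : A, Function.update x i y ∈ ρ} ↔
    ∃ a : Fin n → A, a ∉ ρ ∧ ∀ i : Fin n, ∃ b : A, Function.update a i b ∈ ρ := by
  constructor
  · intro h
    by_contra hc
    push_neg at hc
    apply h
    ext x
    simp only [Set.mem_setOf_eq]
    constructor
    · intro hx i
      exact ⟨x i, by simpa [Function.update_eq_self] using hx⟩
    · intro hx
      by_contra hxρ
      obtain ⟨i, hi⟩ := hc x hxρ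
      obtain ⟨y, hy⟩ := hx i
      exact hi y hy
  · rintro ⟨a, ha, h2⟩ hEq
    exact ha (hEq ▸ h2 : a ∈ ρ)
end

section
/- If (2,2,x₃,…,xₙ) is an essential tuple for a relation ρ on domain {0,1,2}, then ρ is not preserved by the semilattice-without-unit operation s that maps every pair of equal elements to itself and every pair of distinct elements to 2. -/
/-- If `(2,2,x₃,…,xₙ)` is an essential tuple for a relation `ρ` on `{0,1,2}`, then `ρ`
is not preserved by the semilattice-without-unit operation `s` (with `s x x = x` and
`s x y = 2` for `x ≠ y`). -/
theorem essential_tuple_two_two_not_preserved_by_s (n : ℕ) (hn : 2 ≤ n)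
    (ρ : Set (Fin n → Fin 3)) (t : Fin n → Fin 3)
    (h0 : t ⟨0, by omega⟩ = 2) (h1 : t ⟨1, by omega⟩ = 2)
    (htnot : t ∉ ρ)
    (hess : ∀ i : Fin n, ∃ b : Fin 3, Function.update t i b ∈ ρ) :
    ¬ (∀ u v : Fin n → Fin 3, u ∈ ρ → v ∈ ρ →
        (fun i => if u i = v i then u i else 2) ∈ ρ) := by
  intro hpol
  set i0 : Fin n := ⟨0, by omega⟩ with hi0
  set i1 : Fin n := ⟨1, by omega⟩ with hi1
  obtain ⟨b, hb⟩ := hess i0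
  obtain ⟨c, hc⟩ := hess i1
  have hbne : b ≠ 2 := by
    rintro rfl
    rw [← h0, Function.update_eq_self] at hb
    exact htnot hb
  have hcne : c ≠ 2 := by
    rintro rfl
    rw [← h1, Function.update_eq_self] at hc
    exact htnot hc
  have := hpol _ _ hb hc
  have heq : (fun i => if Function.update t i0 b i = Function.update t i1 c i
      then Function.update t i0 b i else 2) = t := by
    funext i
    by_cases h01 : i = i0
    · subst h01
      simp [Function.update_of_ne (show i0 ≠ i1 by simp [hi0, hi1, Fin.ext_iff]),
        Function.update_self, h0, hbne]
    · by_cases h11 : i = i1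
      · subst h11
        simp [Function.update_of_ne (show i1 ≠ i0 by simp [hi0, hi1, Fin.ext_iff]),
          Function.update_self, h1]
      · simp [Function.update_of_ne h01, Function.update_of_ne h11]
  rw [heq] at this
  exact htnot this
end

section
/- For all strict subsets α, β of a finite set A with α ∪ β = A, the relation τ_k(x₁,y₁,z₁,…,x_k,y_k,z_k) := ⋁_{i=1}^{k} ρ'(xᵢ,yᵢ,zᵢ) is definable by a conjunction of instances of the relation σ_k, where each conjunct is obtained by choosing, for each i, two of the three variables xᵢ, yᵢ, zᵢ and applying σ_k to the resulting k pairs. Concretely: the conjunction over all 3^k choice functions c : {1,…,k} → {xy, yz, xz} of σ_k applied to the chosen pairs equals τ_k. -/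
/-- For strict subsets `α, β` of a finite set `A` with `α ∪ β = A`, the relation
`τ_k(x̄,ȳ,z̄) = ⋁ᵢ ρ'(xᵢ,yᵢ,zᵢ)` equals the conjunction, over all `3^k` choice
functions `c : [k] → {xy, yz, xz}`, of `σ_k` applied to the chosen pairs. -/
theorem tau_eq_conj_of_sigma (A : Type) [Fintype A] (α β : Set A)
    (hα : α ≠ Set.univ) (hβ : β ≠ Set.univ) (hu : α ∪ β = Set.univ)
    (k : ℕ) (x y z : Fin k → A) :
    (∃ i : Fin k, (x i ∈ α ∧ y i ∈ α ∧ z i ∈ α) ∨ (x i ∈ β ∧ y i ∈ β ∧ z i ∈ β)) ↔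
    (∀ c : Fin k → Fin 3, ∃ i : Fin k,
      if c i = 0 then ((x i ∈ α ∧ y i ∈ α) ∨ (x i ∈ β ∧ y i ∈ β))
      else if c i = 1 then ((y i ∈ α ∧ z i ∈ α) ∨ (y i ∈ β ∧ z i ∈ β))
      else ((x i ∈ α ∧ z i ∈ α) ∨ (x i ∈ β ∧ z i ∈ β))) := by
  have hmem : ∀ a : A, a ∈ α ∨ a ∈ β := by
    intro a
    have : a ∈ α ∪ β := hu ▸ Set.mem_univ a
    exact this
  constructor
  · rintro ⟨i, h⟩ c
    refine ⟨i, ?_⟩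
    split_ifs <;> tauto
  · intro h
    by_contra hne
    push_neg at hne
    have key : ∀ i : Fin k, ∃ j : Fin 3,
        ¬ (if j = 0 then ((x i ∈ α ∧ y i ∈ α) ∨ (x i ∈ β ∧ y i ∈ β))
           else if j = 1 then ((y i ∈ α ∧ z i ∈ α) ∨ (y i ∈ β ∧ z i ∈ β))
           else ((x i ∈ α ∧ z i ∈ α) ∨ (x i ∈ β ∧ z i ∈ β))) := by
      intro i
      have hi := hne i
      have hx := hmem (x i)
      have hy := hmem (y i)
      have hz := hmem (z i)
      have h0 : ¬((x i ∈ α ∧ y i ∈ α) ∨ (x i ∈ β ∧ y i ∈ β)) ∨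
          ¬((y i ∈ α ∧ z i ∈ α) ∨ (y i ∈ β ∧ z i ∈ β)) ∨
          ¬((x i ∈ α ∧ z i ∈ α) ∨ (x i ∈ β ∧ z i ∈ β)) := by
        tauto
      rcases h0 with h0 | h0 | h0
      · exact ⟨0, by simpa using h0⟩
      · exact ⟨1, by simpa using h0⟩
      · exact ⟨2, by simpa using h0⟩
    choose c hc using key
    obtain ⟨i, hi⟩ := h c
    exact hc i hi
end

section
/- Let α, β ⊊ A with α ∪ β = A. The relation τ_k implies the conjunction Φ of all 3^k instances of σ_k (each choosing two of the three variables from each triple), and conversely, any assignment satisfying Φ satisfies τ_k. In particular, τ_k is primitive-positive definable (in fact quantifier-free definable) from σ_k. -/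
/-- `τ_k` implies the conjunction `Φ` of all `3^k` instances of `σ_k` (each choosing
two of the three variables from each triple), and conversely any assignment
satisfying `Φ` satisfies `τ_k`; hence `τ_k` is quantifier-free definable from `σ_k`. -/
theorem tau_implies_Phi_and_Phi_implies_tau (A : Type) [Fintype A] (α β : Set A)
    (hα : α ≠ Set.univ) (hβ : β ≠ Set.univ) (hu : α ∪ β = Set.univ) (k : ℕ) :
    (∀ x y z : Fin k → A,
      (∃ i : Fin k, (x i ∈ α ∧ y i ∈ α ∧ z i ∈ α) ∨ (x i ∈ β ∧ y i ∈ β ∧ z i ∈ β)) →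
      ∀ c : Fin k → Fin 3, ∃ i : Fin k,
        if c i = 0 then ((x i ∈ α ∧ y i ∈ α) ∨ (x i ∈ β ∧ y i ∈ β))
        else if c i = 1 then ((y i ∈ α ∧ z i ∈ α) ∨ (y i ∈ β ∧ z i ∈ β))
        else ((x i ∈ α ∧ z i ∈ α) ∨ (x i ∈ β ∧ z i ∈ β))) ∧
    (∀ x y z : Fin k → A,
      (∀ c : Fin k → Fin 3, ∃ i : Fin k,
        if c i = 0 then ((x i ∈ α ∧ y i ∈ α) ∨ (x i ∈ β ∧ y i ∈ β))
        else if c i = 1 then ((y i ∈ α ∧ z i ∈ α) ∨ (y i ∈ β ∧ z i ∈ β))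
        else ((x i ∈ α ∧ z i ∈ α) ∨ (x i ∈ β ∧ z i ∈ β))) →
      ∃ i : Fin k, (x i ∈ α ∧ y i ∈ α ∧ z i ∈ α) ∨ (x i ∈ β ∧ y i ∈ β ∧ z i ∈ β)) := by
  classical
  have hmem : ∀ a : A, a ∈ α ∨ a ∈ β := by
    intro a
    have h := hu ▸ Set.mem_univ a
    exact h
  constructor
  · rintro x y z ⟨i, hi⟩ c
    refine ⟨i, ?_⟩
    split_ifs <;> tauto
  · intro x y z h
    by_contra hcon
    push_neg at hcon
    set c : Fin k → Fin 3 := fun i =>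
      if x i ∉ α then (if y i ∉ β then 0 else 2)
      else if y i ∉ α then (if x i ∉ β then 0 else 1)
      else (if x i ∉ β then 2 else 1) with hcdef
    obtain ⟨i, hi⟩ := h c
    have hni := hcon i
    have h1 := hmem (x i)
    have h2 := hmem (y i)
    have h3 := hmem (z i)
    simp only [hcdef] at hi
    split_ifs at hi <;> simp_all <;> tauto
end

section
/- Let A = {a₁,…,aₙ} and let α, β ⊊ A with α ∪ β = A. Fix m ≥ 1. Define the (3m+1)-ary operation f on A by: f(x₁,…,x_{3m+1}) = x if at least 3m of the arguments equal x (near-unanimity behavior), and f(x₁,…,x_{3m+1}) = a otherwise, where a is some fixed element of α ∩ β (assuming α ∩ β ≠ ∅). Then f is a polymorphism of the relation σ_i for every i ≤ m. -/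
/-- The `(3m+1)`-ary near-unanimity-style operation `f` (returning the value taken by
at least `3m` of the arguments if one exists, and a fixed `a ∈ α ∩ β` otherwise) is a
polymorphism of the relation `σ_i` for every `i ≤ m`. -/
theorem near_unanimity_polymorphism_of_sigma (A : Type) [Fintype A] [DecidableEq A]
    (α β : Set A) (hα : α ≠ Set.univ) (hβ : β ≠ Set.univ) (hu : α ∪ β = Set.univ)
    (a : A) (ha : a ∈ α ∩ β) (m : ℕ) (hm : 1 ≤ m)
    (f : (Fin (3 * m + 1) → A) → A)
    (hf1 : ∀ (t : Fin (3 * m + 1) → A) (x : A),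
      3 * m ≤ (Finset.univ.filter (fun j => t j = x)).card → f t = x)
    (hf2 : ∀ t : Fin (3 * m + 1) → A,
      (¬ ∃ x : A, 3 * m ≤ (Finset.univ.filter (fun j => t j = x)).card) → f t = a) :
    ∀ i : ℕ, i ≤ m → ∀ ts : Fin (3 * m + 1) → Fin i → A × A,
      (∀ j, ∃ l : Fin i,
        ((ts j l).1 ∈ α ∧ (ts j l).2 ∈ α) ∨ ((ts j l).1 ∈ β ∧ (ts j l).2 ∈ β)) →
      ∃ l : Fin i,
        ((f (fun j => (ts j l).1) ∈ α ∧ f (fun j => (ts j l).2) ∈ α) ∨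
         (f (fun j => (ts j l).1) ∈ β ∧ f (fun j => (ts j l).2) ∈ β)) := by
  intro i hi ts hts
  by_contra hcon
  push_neg at hcon
  set u : Fin i → A := fun l => f (fun j => (ts j l).1) with hudef
  set v : Fin i → A := fun l => f (fun j => (ts j l).2) with hvdef
  have keyu : ∀ l, u l = f (fun j => (ts j l).1) := fun _ => rfl
  have keyv : ∀ l, v l = f (fun j => (ts j l).2) := fun _ => rfl
  simp only [← keyu, ← keyv] at hcon
  have hmem : ∀ x : A, x ∈ α ∨ x ∈ β := by
    intro x
    have : x ∈ α ∪ β := by rw [hu]; trivial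
    exact this
  -- u l ≠ a and v l ≠ a
  have hne : ∀ l, u l ≠ a ∧ v l ≠ a := by
    intro l
    obtain ⟨h1, h2⟩ := hcon l
    constructor
    · intro h
      rw [h] at h1 h2
      rcases hmem (v l) with hv | hv
      · exact h1 ha.1 hv
      · exact h2 ha.2 hv
    · intro h
      rw [h] at h1 h2
      rcases hmem (u l) with hv | hv
      · exact h1 hv ha.1
      · exact h2 hv ha.2
  have hbig : ∀ t : Fin (3 * m + 1) → A, f t ≠ a →
      3 * m ≤ (Finset.univ.filter (fun j => t j = f t)).card := by
    intro t hta
    by_cases h : ∃ x : A, 3 * m ≤ (Finset.univ.filter (fun j => t j = x)).card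
    · obtain ⟨x, hx⟩ := h
      have := hf1 t x hx
      rw [this]
      exact hx
    · exact absurd (hf2 t h) hta
  have hsmall : ∀ (t : Fin (3 * m + 1) → A), f t ≠ a →
      (Finset.univ.filter (fun j => ¬ (t j = f t))).card ≤ 1 := by
    intro t hta
    have h1 := hbig t hta
    have h2 := Finset.card_filter_add_card_filter_not
      (s := (Finset.univ : Finset (Fin (3 * m + 1)))) (p := fun j => t j = f t)
    rw [Finset.card_univ, Fintype.card_fin] at h2
    omega
  set Bad : Finset (Fin (3 * m + 1)) := Finset.univ.biUnion
    (fun l : Fin i => (Finset.univ.filter (fun j => ¬ ((ts j l).1 = u l))) ∪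
      (Finset.univ.filter (fun j => ¬ ((ts j l).2 = v l)))) with hBad
  have hcard : Bad.card ≤ 2 * i := by
    calc Bad.card ≤ ∑ l : Fin i, ((Finset.univ.filter (fun j => ¬ ((ts j l).1 = u l))) ∪
        (Finset.univ.filter (fun j => ¬ ((ts j l).2 = v l)))).card :=
          Finset.card_biUnion_le
      _ ≤ ∑ l : Fin i, 2 := by
          apply Finset.sum_le_sum
          intro l _
          have h1 := hsmall (fun j => (ts j l).1) (hne l).1
          have h2 := hsmall (fun j => (ts j l).2) (hne l).2
          have := Finset.card_union_le
            (Finset.univ.filter (fun j => ¬ ((ts j l).1 = u l)))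
            (Finset.univ.filter (fun j => ¬ ((ts j l).2 = v l)))
          beta_reduce at h1 h2
          simp only [keyu, keyv] at this ⊢
          omega
      _ = 2 * i := by simp [mul_comm]
  have hex : ∃ j : Fin (3 * m + 1), j ∉ Bad := by
    have hc : Badᶜ.card = 3 * m + 1 - Bad.card := by
      rw [Finset.card_compl, Fintype.card_fin]
    have : 0 < Badᶜ.card := by omega
    obtain ⟨j, hj⟩ := Finset.card_pos.mp this
    exact ⟨j, by simpa using hj⟩
  obtain ⟨j, hj⟩ := hex
  simp only [hBad, Finset.mem_biUnion, Finset.mem_univ, true_and, Finset.mem_union,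
    Finset.mem_filter, not_exists, not_or, not_not] at hj
  obtain ⟨l, hl⟩ := hts j
  obtain ⟨e1, e2⟩ := hj l
  rw [e1, e2] at hl
  obtain ⟨h1, h2⟩ := hcon l
  rcases hl with ⟨p, q⟩ | ⟨p, q⟩
  · exact h1 p q
  · exact h2 p q
end

section
/- Let A be a finite set, α, β ⊊ A with α ∪ β = A and α ∩ β ≠ ∅, and fix c ∈ α ∩ β. Then every relation τ_k is existentially trivial with canon c: for every k, every coordinate position i of the 3k-ary relation τ_k, and every tuple t ∈ τ_k, the tuple obtained from t by replacing its i-th coordinate with c is also in τ_k. -/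
/-- Every relation `τ_k` is existentially trivial with canon `c ∈ α ∩ β`: replacing
any single coordinate of a tuple of `τ_k` by `c` stays in `τ_k`.  Tuples of the
`3k`-ary relation `τ_k` are represented as `k` triples indexed by `Fin 3`. -/
theorem tau_existentially_trivial (A : Type) [Fintype A] (α β : Set A)
    (hα : α ≠ Set.univ) (hβ : β ≠ Set.univ) (hu : α ∪ β = Set.univ)
    (c : A) (hc : c ∈ α ∩ β) (k : ℕ)
    (t : Fin k → Fin 3 → A)
    (ht : ∃ i : Fin k, (∀ j : Fin 3, t i j ∈ α) ∨ (∀ j : Fin 3, t i j ∈ β))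
    (i₀ : Fin k) (j₀ : Fin 3) :
    ∃ i : Fin k,
      (∀ j : Fin 3, Function.update t i₀ (Function.update (t i₀) j₀ c) i j ∈ α) ∨
      (∀ j : Fin 3, Function.update t i₀ (Function.update (t i₀) j₀ c) i j ∈ β) := by
  obtain ⟨i, hi⟩ := ht
  refine ⟨i, ?_⟩
  by_cases h : i = i₀
  · subst h
    rw [Function.update_self]
    rcases hi with hA | hB
    · left
      intro j
      by_cases hj : j = j₀
      · subst hj; rw [Function.update_self]; exact hc.1
      · rw [Function.update_of_ne hj]; exact hA j
    · right
      intro j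
      by_cases hj : j = j₀
      · subst hj; rw [Function.update_self]; exact hc.2
      · rw [Function.update_of_ne hj]; exact hB j
  · rw [Function.update_of_ne h]
    exact hi
end

section
/- If a structure A on a finite domain has a k-ary idempotent polymorphism f such that for each coordinate position i, f restricted to having value x in position i (and arbitrary values elsewhere) is surjective onto A (a Hubie polymorphism in {x}), then for every m ≥ 1, the set of adversaries Υ_{m,k-1,x} generates the full adversary A^m: every tuple t ∈ A^m is the image under some polymorphism (a composition of f with projections) of tuples from Υ_{m,k-1,x}. -/
/-!
Induct on the number of coordinates of `t` different from `x`. If there are at least `k` of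
them, pick `k` distinct such coordinates `e 0, …, e (k-1)`. By the Hubie property, for each `l`
there is `s l` with `s l l = x` and `f (s l) = t (e l)`; let `u j` agree with `t` off the chosen
coordinates and take the value `s l j` at `e l`. Idempotency gives `f (u 0 i, …, u (k-1) i) = t i`
for every `i`, and `u j` equals `x` at `e j`, so it has fewer coordinates different from `x` than
`t` and is generated by induction.
-/

/-- Operations in the clone generated by a single `k`-ary operation `f`
(compositions of `f` with projections). -/
inductive InClone (A : Type) (k : ℕ) (f : (Fin k → A) → A) :
    (n : ℕ) → ((Fin n → A) → A) → Prop
  | proj (n : ℕ) (i : Fin n) : InClone A k f n (fun t => t i)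
  | comp (n : ℕ) (gs : Fin k → (Fin n → A) → A)
      (h : ∀ j : Fin k, InClone A k f n (gs j)) :
      InClone A k f n (fun t => f (fun j => gs j t))

variable {A : Type} {k : ℕ} {f : (Fin k → A) → A} {m : ℕ}

theorem InClone.rename {n : ℕ} {g : (Fin n → A) → A} (hg : InClone A k f n g)
    {r : ℕ} (e : Fin n → Fin r) : InClone A k f r (fun t => g (fun i => t (e i))) := by
  induction hg with
  | proj i => exact .proj r (e i)
  | comp gs _ ih => exact .comp r (fun j t => gs j (fun i => t (e i))) ih

def GeneratedBy (f : (Fin k → A) → A) (S : (Fin m → A) → Prop) (t : Fin m → A) : Prop :=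
  ∃ (r : ℕ) (g : (Fin r → A) → A), InClone A k f r g ∧
    ∃ ts : Fin r → Fin m → A, (∀ j, S (ts j)) ∧ ∀ i, g (fun j => ts j i) = t i

namespace GeneratedBy

variable {S : (Fin m → A) → Prop}

theorem of_mem {t : Fin m → A} (ht : S t) : GeneratedBy f S t :=
  ⟨1, fun s => s 0, .proj 1 0, fun _ => t, fun _ => ht, fun _ => rfl⟩

/-- Run the `k` generating operations side by side on the disjoint union of their argument
lists. -/
theorem apply {u : Fin k → Fin m → A} (hu : ∀ j, GeneratedBy f S (u j)) :
    GeneratedBy f S (fun i => f fun j => u j i) := by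
  choose r g hg ts hts hgts using hu
  let σ : (Σ j, Fin (r j)) ≃ Fin (Fintype.card (Σ j, Fin (r j))) := Fintype.equivFin _
  refine ⟨_, fun t => f fun j => g j fun q => t (σ ⟨j, q⟩),
    .comp _ _ fun j => (hg j).rename fun q => σ ⟨j, q⟩,
    fun p => Sigma.uncurry ts (σ.symm p), fun p => hts _ _, fun i => ?_⟩
  simp only [Equiv.symm_apply_apply]
  exact congrArg f (funext fun j => hgts j i)

end GeneratedBy

section Hubie

variable [DecidableEq A] (x : A)

def supportFrom (t : Fin m → A) : Finset (Fin m) :=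
  Finset.univ.filter fun i => t i ≠ x

/-- Membership in some adversary of `Υ_{m,p,x}`. -/
def InUpsilon (p : ℕ) (t : Fin m → A) : Prop :=
  (supportFrom x t).card ≤ p

variable {x}

theorem exists_decomposition_of_hubie (hidem : ∀ a : A, f (fun _ => a) = a)
    (hHubie : ∀ (i : Fin k) (a : A), ∃ t : Fin k → A, t i = x ∧ f t = a)
    {t : Fin m → A} {e : Fin k → Fin m} (he : e.Injective)
    (he_supp : ∀ l, e l ∈ supportFrom x t) :
    ∃ u : Fin k → Fin m → A, (fun i => f fun j => u j i) = t ∧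
      ∀ j, supportFrom x (u j) ⊆ (supportFrom x t).erase (e j) := by
  choose s hsx hsf using fun l => hHubie l (t (e l))
  refine ⟨fun j => Function.extend e (fun l => s l j) t, funext fun i => ?_, fun j i hi => ?_⟩
  · by_cases hi : ∃ l, e l = i
    · obtain ⟨l, rfl⟩ := hi
      simp only [he.extend_apply, hsf]
    · simp only [Function.extend_apply' _ _ _ hi, hidem]
  · simp only [supportFrom, Finset.mem_filter, Finset.mem_univ, true_and] at hi
    refine Finset.mem_erase.2 ⟨?_, ?_⟩
    · rintro rfl
      exact hi (by rw [he.extend_apply, hsx])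
    · by_cases hi' : ∃ l, e l = i
      · obtain ⟨l, rfl⟩ := hi'
        exact he_supp l
      · rw [Function.extend_apply' _ _ _ hi'] at hi
        simpa only [supportFrom, Finset.mem_filter, Finset.mem_univ, true_and] using hi

theorem generatedBy_inUpsilon_of_hubie (hidem : ∀ a : A, f (fun _ => a) = a)
    (hHubie : ∀ (i : Fin k) (a : A), ∃ t : Fin k → A, t i = x ∧ f t = a)
    (t : Fin m → A) : GeneratedBy f (InUpsilon x (k - 1)) t := by
  induction hN : (supportFrom x t).card using Nat.strong_induction_on generalizing t with
  | _ N ih =>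
    by_cases hsmall : N ≤ k - 1
    · exact .of_mem (hN.trans_le hsmall)
    have hk : k ≤ (supportFrom x t).card := by omega
    obtain ⟨u, rfl, hu⟩ := exists_decomposition_of_hubie hidem hHubie
      ((supportFrom x t).orderEmbOfCardLe hk).injective
      ((supportFrom x t).orderEmbOfCardLe_mem hk)
    refine .apply fun j => ih _ ?_ (u j) rfl
    have := Finset.card_le_card (hu j)
    rw [Finset.card_erase_of_mem (Finset.orderEmbOfCardLe_mem _ hk j)] at this
    omega

end Hubie

theorem hubie_pol_generates_full_adversary_general (A : Type) [DecidableEq A]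
    (x : A) (k : ℕ) (f : (Fin k → A) → A)
    (hidem : ∀ a : A, f (fun _ => a) = a)
    (hHubie : ∀ (i : Fin k) (a : A), ∃ t : Fin k → A, t i = x ∧ f t = a) :
    ∀ m : ℕ, 1 ≤ m → ∀ t : Fin m → A,
      ∃ (r : ℕ) (g : (Fin r → A) → A), InClone A k f r g ∧
        ∃ ts : Fin r → Fin m → A,
          (∀ j : Fin r, (Finset.univ.filter (fun i : Fin m => ts j i ≠ x)).card ≤ k - 1) ∧
          (∀ i : Fin m, g (fun j => ts j i) = t i) :=
  fun _ _ t => generatedBy_inUpsilon_of_hubie hidem hHubie t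

/-- Chen's Lemma: if `f` is a `k`-ary idempotent Hubie polymorphism in `{x}`, then for
every `m ≥ 1` the set of adversaries `Υ_{m,k-1,x}` generates the full adversary `A^m`:
every tuple `t ∈ A^m` is the coordinatewise image, under some operation in the clone
generated by `f`, of tuples each having at most `k-1` coordinates different from `x`. -/
theorem hubie_pol_generates_full_adversary (A : Type) [Fintype A] [DecidableEq A]
    (x : A) (k : ℕ) (f : (Fin k → A) → A)
    (hidem : ∀ a : A, f (fun _ => a) = a)
    (hHubie : ∀ (i : Fin k) (a : A), ∃ t : Fin k → A, t i = x ∧ f t = a) :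
    ∀ m : ℕ, 1 ≤ m → ∀ t : Fin m → A,
      ∃ (r : ℕ) (g : (Fin r → A) → A), InClone A k f r g ∧
        ∃ ts : Fin r → Fin m → A,
          (∀ j : Fin r, (Finset.univ.filter (fun i : Fin m => ts j i ≠ x)).card ≤ k - 1) ∧
          (∀ i : Fin m, g (fun j => ts j i) = t i) :=
  hubie_pol_generates_full_adversary_general A x k f hidem hHubie
end

section
/- Let B ⊆ A and p ≥ 0. The sequence of adversary sets (Υ_{m,p,B})_{m∈ℕ} is projective: for every m ≥ 1 and every adversary B ∈ Υ_{n·m, p, B} (where n = |A|), there exists an adversary A' ∈ Υ_{m,p,B} that contains every adversary obtained from B by projecting onto any choice of m coordinates, one from each consecutive block of n coordinates. -/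
/-- Projectivity of the collapsibility adversaries `Υ_{m,p,B}` (with `n = |A|`).
A member of `Υ_{n·m,p,B}` is given by its source element `x ∈ B` and the set `S` of
`p` positions equal to `A` (tuples `u` with `u j = x` off `S`).  There is a member of
`Υ_{m,p,B}` (given by `y ∈ B` and `T` of size `p`) containing every projection of the
long adversary onto one coordinate per consecutive block of size `n`. -/
theorem upsilon_adversaries_projective (A : Type) [Fintype A] (n : ℕ)
    (hn : Fintype.card A = n) (B : Set A) (p m : ℕ) (hm : 1 ≤ m) (hpm : p ≤ m)
    (x : A) (hx : x ∈ B) (S : Finset (Fin (n * m))) (hS : S.card = p) :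
    ∃ y : A, y ∈ B ∧ ∃ T : Finset (Fin m), T.card = p ∧
      ∀ sel : Fin m → Fin (n * m),
        (∀ i : Fin m, n * (i : ℕ) ≤ ((sel i : ℕ)) ∧ ((sel i : ℕ)) < n * ((i : ℕ) + 1)) →
        ∀ u : Fin (n * m) → A, (∀ j : Fin (n * m), j ∉ S → u j = x) →
          ∀ i : Fin m, i ∉ T → u (sel i) = y := by
  refine ⟨x, hx, ?_⟩
  -- map each long coordinate to its block
  have hblt : ∀ j : Fin (n * m), (j : ℕ) / n < m := by
    intro j
    have := j.isLt
    rcases Nat.eq_zero_or_pos n with h0 | h0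
    · subst h0; exact absurd this (by omega)
    · exact Nat.div_lt_of_lt_mul this
  set blk : Fin (n * m) → Fin m := fun j => ⟨(j : ℕ) / n, hblt j⟩ with hblk
  have hT0 : (S.image blk).card ≤ p := hS ▸ Finset.card_image_le
  obtain ⟨T, hsub, hTcard⟩ := Finset.exists_superset_card_eq hT0
    (by simpa [Fintype.card_fin] using hpm)
  refine ⟨T, hTcard, ?_⟩
  intro sel hsel u hu i hiT
  have hns : sel i ∉ S := by
    intro hmem
    apply hiT
    apply hsub
    have : blk (sel i) = i := by
      apply Fin.ext
      obtain ⟨h1, h2⟩ := hsel i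
      simp only [hblk]
      exact Nat.div_eq_of_lt_le ((mul_comm ((i : ℕ)) n).trans_le h1) (h2.trans_eq (mul_comm n _))
    exact this ▸ Finset.mem_image_of_mem blk hmem
  exact hu _ hns
end

section
/- Let A be a finite structure, φ a pH-sentence with m universal variables, A an adversary of length m, and Ω_m a set of adversaries of length m. If A ⊨ φ↾B for every B ∈ Ω_m, and A is reactively composable from Ω_m via a polymorphism f of A, then A ⊨ φ↾A. In particular, if the full adversary A^m is reactively composable from Ω_m, then A ⊨ φ↾Ω_m implies A ⊨ φ. -/
/-- Satisfaction of a pH-sentence against an adversary `B`.  The sentence has `m`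
universal variables, existential variables indexed by `V`, where the existential
variable `v` is preceded by the first `lv v` universal variables; `ψ` is the
quantifier-free part.  There must be Skolem functions (each depending only on the
preceding universal variables) satisfying `ψ` on every play from `B`. -/
def SatAdv (A : Type) (m : ℕ) (V : Type) (lv : V → ℕ)
    (ψ : (Fin m → A) → (V → A) → Prop) (B : Set (Fin m → A)) : Prop :=
  ∃ σ : V → (Fin m → A) → A,
    (∀ (v : V) (π π' : Fin m → A),
      (∀ i : Fin m, (i : ℕ) < lv v → π i = π' i) → σ v π = σ v π') ∧
    ∀ π ∈ B, ψ π (fun v => σ v π)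

/-- Reactive composition theorem (Chen).  If `𝒜` is reactively composable from
adversaries `Bs j ∈ Ω` via a `k`-ary polymorphism `f` (i.e. `ψ` is preserved by `f`),
witnessed by partial functions `g j i` depending only on the first `i+1` universal
values, then winning against every adversary of `Ω` gives a win against `𝒜`. -/
theorem reactive_composition (A : Type) (m k : ℕ) (V : Type) (lv : V → ℕ)
    (ψ : (Fin m → A) → (V → A) → Prop)
    (f : (Fin k → A) → A)
    (hψ : ∀ (πs : Fin k → Fin m → A) (es : Fin k → V → A),
      (∀ j, ψ (πs j) (es j)) →
      ψ (fun i => f (fun j => πs j i)) (fun v => f (fun j => es j v)))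
    (Ω : Set (Set (Fin m → A))) (𝒜 : Set (Fin m → A))
    (Bs : Fin k → Set (Fin m → A)) (hBs : ∀ j, Bs j ∈ Ω)
    (g : Fin k → (i : Fin m) → (Fin ((i : ℕ) + 1) → A) → A)
    (hg1 : ∀ π ∈ 𝒜, ∀ j : Fin k,
      (fun i : Fin m => g j i (fun l => π (Fin.castLE i.isLt l))) ∈ Bs j)
    (hg2 : ∀ π ∈ 𝒜, ∀ i : Fin m,
      π i = f (fun j => g j i (fun l => π (Fin.castLE i.isLt l))))
    (hSat : ∀ B ∈ Ω, SatAdv A m V lv ψ B) :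
    SatAdv A m V lv ψ 𝒜 := by
  choose σ hσ1 hσ2 using hSat
  refine ⟨fun v π => f (fun j => σ (Bs j) (hBs j) v
      (fun i => g j i (fun l => π (Fin.castLE i.isLt l)))), ?_, ?_⟩
  · intro v π π' h
    have : (fun j => σ (Bs j) (hBs j) v (fun i => g j i (fun l => π (Fin.castLE i.isLt l))))
        = (fun j => σ (Bs j) (hBs j) v (fun i => g j i (fun l => π' (Fin.castLE i.isLt l)))) := by
      funext j
      refine hσ1 _ _ _ _ _ (fun i hi => ?_)
      have : (fun l => π (Fin.castLE i.isLt l)) = (fun l => π' (Fin.castLE i.isLt l)) := by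
        funext l
        exact h _ (lt_of_le_of_lt (Nat.lt_succ_iff.mp l.isLt) hi)
      rw [this]
    simp only []
    rw [this]
  · intro π hπ
    have h := hψ (fun j i => g j i (fun l => π (Fin.castLE i.isLt l)))
      (fun j v => σ (Bs j) (hBs j) v (fun i => g j i (fun l => π (Fin.castLE i.isLt l))))
      (fun j => hσ2 (Bs j) (hBs j) _ (hg1 π hπ j))
    have e : (fun i => f (fun j => g j i (fun l => π (Fin.castLE i.isLt l)))) = π := by
      funext i; exact (hg2 π hπ i).symm
    rwa [e] at h
end

section
/- Let D = {0,1,2} and let s be the idempotent binary operation with s(x,y) = 2 for x ≠ y. Suppose an idempotent algebra 𝔸 on D contains s, has exactly the subalgebras {0,2} and {1,2}, is not {0,2}{1,2}-projective, and satisfies the Zhuk Condition in its first regime: there exist idempotent terms, a ternary r₃ such that r₃ applied to the columns of the matrix with rows 001, 010, 011 yields (0,0,2), i.e., r₃(0,0,1)=0, r₃(0,1,0)=0, r₃(0,1,1)=2, and a binary p with p(0,1)=0, p(0,2)=2. Assume also 𝔸 contains the operations p₁, p₂ of Lemma fun (p₁(0,1)=1, p₁(1,0)=p₁(2,0)=2;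 p₂(0,1)=0, p₂(1,0)=p₂(1,2)=2). Then for every n ≥ 3, every relation ρ ∈ Inv(𝔸) of arity h < n+1 is preserved by the (n+1)-ary operation f^a_n defined by: f^a_n(1,…,1) = 1; f^a_n(t) = 0 if t ∈ {0,1}^{n+1} contains at most one 1; and f^a_n(t) = 2 otherwise. -/
/-- `f` (of arity `k`) preserves the `h`-ary relation `ρ` on `{0,1,2}`. -/
def Preserves3 (k : ℕ) (f : (Fin k → Fin 3) → Fin 3)
    (h : ℕ) (ρ : Set (Fin h → Fin 3)) : Prop :=
  ∀ ts : Fin k → Fin h → Fin 3, (∀ j, ts j ∈ ρ) →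
    (fun i => f (fun j => ts j i)) ∈ ρ

/-- The `(n+1)`-ary operation `f^a_n` on `{0,1,2}`: all-ones maps to `1`, a `{0,1}`
tuple with at most one `1` maps to `0`, everything else maps to `2`. -/
def fan (n : ℕ) (t : Fin (n + 1) → Fin 3) : Fin 3 :=
  if ∀ i, t i = 1 then 1
  else if (∀ i, t i = 0 ∨ t i = 1) ∧
          (Finset.univ.filter (fun i => t i = 1)).card ≤ 1 then 0
  else 2

lemma fin3_cases (a : Fin 3) : a = 0 ∨ a = 1 ∨ a = 2 := by revert a; decide

lemma fan_eq_one {n : ℕ} {t : Fin (n+1) → Fin 3} (h : fan n t = 1) : ∀ i, t i = 1 := by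
  unfold fan at h
  split_ifs at h with h1 h2
  · exact h1
  · exact absurd h (by decide)
  · exact absurd h (by decide)

lemma fan_eq_zero {n : ℕ} {t : Fin (n+1) → Fin 3} (h : fan n t = 0) :
    (∀ i, t i = 0 ∨ t i = 1) ∧ (Finset.univ.filter (fun i => t i = 1)).card ≤ 1 := by
  unfold fan at h
  split_ifs at h with h1 h2
  · exact absurd h (by decide)
  · exact h2
  · exact absurd h (by decide)

lemma fan_eq_two {n : ℕ} {t : Fin (n+1) → Fin 3} (h : fan n t = 2) :
    (¬ ∀ i, t i = 1) ∧
      ¬ ((∀ i, t i = 0 ∨ t i = 1) ∧ (Finset.univ.filter (fun i => t i = 1)).card ≤ 1) := by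
  unfold fan at h
  split_ifs at h with h1 h2
  · exact absurd h (by decide)
  · exact absurd h (by decide)
  · exact ⟨h1, h2⟩

lemma col2 {h : ℕ} (a b : Fin h → Fin 3) (i : Fin h) :
    (fun j : Fin 2 => (![a, b] : Fin 2 → Fin h → Fin 3) j i) = ![a i, b i] := by
  funext j; fin_cases j <;> rfl

lemma col3 {h : ℕ} (a b c : Fin h → Fin 3) (i : Fin h) :
    (fun j : Fin 3 => (![a, b, c] : Fin 3 → Fin h → Fin 3) j i) = ![a i, b i, c i] := by
  funext j; fin_cases j <;> rfl

lemma vec2_const (x : Fin 3) : (![x, x] : Fin 2 → Fin 3) = fun _ => x := by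
  funext j; fin_cases j <;> rfl

lemma vec3_const (x : Fin 3) : (![x, x, x] : Fin 3 → Fin 3) = fun _ => x := by
  funext j; fin_cases j <;> rfl

/-- Zhuk-style lemma.  Suppose `InF` is the set of term operations of an idempotent
algebra `𝔸` on `{0,1,2}` containing the semilattice operation `s`, having exactly the
subalgebras `{0,2}` and `{1,2}` (so `{0,1}` is not closed), not `{0,2}{1,2}`-projective,
satisfying the first regime of the Zhuk Condition (operations `r₃` and `p`), and
containing the operations `p₁`, `p₂`.  Then for every `n ≥ 3`, every relation
`ρ ∈ Inv(𝔸)` of arity `h < n+1` is preserved by `f^a_n`. -/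
theorem fan_preserves_inv (InF : (k : ℕ) → ((Fin k → Fin 3) → Fin 3) → Prop)
    (hidem : ∀ k f, InF k f → ∀ a : Fin 3, f (fun _ => a) = a)
    (hs : InF 2 (fun t => if t 0 = t 1 then t 0 else 2))
    (hsub02 : ∀ k f, InF k f → ∀ t : Fin k → Fin 3,
      (∀ j, t j = 0 ∨ t j = 2) → (f t = 0 ∨ f t = 2))
    (hsub12 : ∀ k f, InF k f → ∀ t : Fin k → Fin 3,
      (∀ j, t j = 1 ∨ t j = 2) → (f t = 1 ∨ f t = 2))
    (hnot01 : ∃ k f, InF k f ∧ ∃ t : Fin k → Fin 3,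
      (∀ j, t j = 0 ∨ t j = 1) ∧ f t = 2)
    (hnotproj : ∃ k f, InF k f ∧ ∀ i : Fin k, ∃ xx : Fin k → Fin 3,
      ((xx i = 0 ∨ xx i = 2) ∧ ¬(f xx = 0 ∨ f xx = 2)) ∨
      ((xx i = 1 ∨ xx i = 2) ∧ ¬(f xx = 1 ∨ f xx = 2)))
    (hr3 : ∃ r3, InF 3 r3 ∧ r3 ![0, 0, 1] = 0 ∧ r3 ![0, 1, 0] = 0 ∧ r3 ![0, 1, 1] = 2)
    (hp : ∃ p, InF 2 p ∧ p ![0, 1] = 0 ∧ p ![0, 2] = 2)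
    (hp1 : ∃ p1, InF 2 p1 ∧ p1 ![0, 1] = 1 ∧ p1 ![1, 0] = 2 ∧ p1 ![2, 0] = 2)
    (hp2 : ∃ p2, InF 2 p2 ∧ p2 ![0, 1] = 0 ∧ p2 ![1, 0] = 2 ∧ p2 ![1, 2] = 2) :
    ∀ n : ℕ, 3 ≤ n → ∀ h : ℕ, h < n + 1 → ∀ ρ : Set (Fin h → Fin 3),
      (∀ k f, InF k f → Preserves3 k f h ρ) → Preserves3 (n + 1) (fan n) h ρ := by
  intro n hn h
  induction h using Nat.strong_induction_on with
  | _ h IH =>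
  intro hh ρ hρ ts hts
  by_contra hb
  set b : Fin h → Fin 3 := fun i => fan n (fun j => ts j i) with hbdef
  -- column facts
  have hcol1 : ∀ i, b i = 1 → ∀ j, ts j i = 1 := fun i hi => fan_eq_one hi
  have hcol0 : ∀ i, b i = 0 → (∀ j, ts j i = 0 ∨ ts j i = 1) ∧
      (Finset.univ.filter (fun j => ts j i = 1)).card ≤ 1 := fun i hi => fan_eq_zero hi
  have hcol2 : ∀ i, b i = 2 → (¬ ∀ j, ts j i = 1) ∧
      ¬ ((∀ j, ts j i = 0 ∨ ts j i = 1) ∧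
        (Finset.univ.filter (fun j => ts j i = 1)).card ≤ 1) := fun i hi => fan_eq_two hi
  -- essentiality
  have ess : ∀ i : Fin h, ∃ d, Function.update b i d ∈ ρ := by
    intro i
    have hpos : 0 < h := i.pos
    obtain ⟨m, rfl⟩ : ∃ m, h = m + 1 := ⟨h - 1, by omega⟩
    set ρi : Set (Fin m → Fin 3) := {x | ∃ d : Fin 3, (i.insertNth d x : Fin (m+1) → Fin 3) ∈ ρ}
      with hρidef
    have hinv : ∀ k f, InF k f → Preserves3 k f m ρi := by
      intro k f hf ts' hts'
      choose ds hds using hts'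
      have hmem := hρ k f hf (fun j => (i.insertNth (ds j) (ts' j) : Fin (m+1) → Fin 3)) hds
      refine ⟨f ds, ?_⟩
      have heq : (i.insertNth (f ds) (fun t => f (fun j => ts' j t)) : Fin (m+1) → Fin 3)
          = fun t => f (fun j => (i.insertNth (ds j) (ts' j) : Fin (m+1) → Fin 3) t) := by
        funext t
        refine Fin.succAboveCases i ?_ ?_ t <;> simp
      rw [heq]
      exact hmem
    have hmemi : ∀ j, (fun t => ts j (i.succAbove t)) ∈ ρi := by
      intro j
      refine ⟨ts j i, ?_⟩
      have : (i.insertNth (ts j i) (fun t => ts j (i.succAbove t)) : Fin (m+1) → Fin 3)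
          = ts j := by
        funext t
        refine Fin.succAboveCases i ?_ ?_ t <;> simp
      rw [this]; exact hts j
    have hfan := IH m (by omega) (by omega) ρi hinv (fun j t => ts j (i.succAbove t)) hmemi
    obtain ⟨d, hd⟩ := hfan
    refine ⟨d, ?_⟩
    have : Function.update b i d
        = (i.insertNth d (fun t => fan n (fun j => ts j (i.succAbove t))) : Fin (m+1) → Fin 3) := by
      funext t
      refine Fin.succAboveCases i ?_ ?_ t
      · simp
      · intro t'
        rw [Function.update_of_ne (Fin.succAbove_ne i t')]
        simp [hbdef]
    rw [this]; exact hd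
  by_cases h2e : ∃ i, b i = 2
  · obtain ⟨i0, hi0⟩ := h2e
    -- no second 2
    have honly : ∀ i, i ≠ i0 → b i ≠ 2 := by
      intro i hne h2'
      obtain ⟨d, hd⟩ := ess i
      obtain ⟨d', hd'⟩ := ess i0
      have hmem := hρ 2 _ hs ![Function.update b i d, Function.update b i0 d']
        (by intro j; fin_cases j <;> assumption)
      apply hb
      have heq : (fun t => (fun v : Fin 2 → Fin 3 => if v 0 = v 1 then v 0 else 2)
          (fun j => (![Function.update b i d, Function.update b i0 d'] :
            Fin 2 → Fin h → Fin 3) j t)) = b := by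
        funext t
        rw [col2]
        by_cases ht : t = i
        · subst ht
          rw [Function.update_self, Function.update_of_ne hne, h2']
          show (if d = 2 then d else 2) = (2 : Fin 3)
          split_ifs with hdd
          · exact hdd
          · rfl
        · by_cases ht0 : t = i0
          · subst ht0
            rw [Function.update_of_ne (Ne.symm hne), Function.update_self, hi0]
            show (if (2 : Fin 3) = d' then (2 : Fin 3) else 2) = (2 : Fin 3)
            split_ifs <;> rfl
          · rw [Function.update_of_ne ht, Function.update_of_ne ht0]
            show (if b t = b t then b t else 2) = b t
            rw [if_pos rfl]
      rw [heq] at hmem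
      exact hmem
    have hb01 : ∀ i, i ≠ i0 → b i = 0 ∨ b i = 1 := by
      intro i hi
      rcases fin3_cases (b i) with hx | hx | hx
      · exact Or.inl hx
      · exact Or.inr hx
      · exact absurd hx (honly i hi)
    obtain ⟨d, hd⟩ := ess i0
    rcases fin3_cases d with rfl | rfl | rfl
    · -- d = 0 : use p or r3
      by_cases h2c : ∃ j, ts j i0 = 2
      · obtain ⟨j, hj⟩ := h2c
        obtain ⟨p, hpin, hpv1, hpv2⟩ := hp
        have hmem := hρ 2 p hpin ![Function.update b i0 0, ts j]
          (by intro jj; fin_cases jj; exacts [hd, hts j])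
        apply hb
        have heq : (fun t => p (fun jj => (![Function.update b i0 0, ts j] :
            Fin 2 → Fin h → Fin 3) jj t)) = b := by
          funext t
          rw [col2]
          by_cases ht : t = i0
          · subst ht
            rw [Function.update_self, hj, hi0]
            exact hpv2
          · rw [Function.update_of_ne ht]
            rcases hb01 t ht with hbt | hbt
            · rcases (hcol0 t hbt).1 j with hcj | hcj
              · rw [hbt, hcj, vec2_const]; exact hidem 2 p hpin 0
              · rw [hbt, hcj]; exact hpv1
            · rw [hbt, hcol1 t hbt j, vec2_const]; exact hidem 2 p hpin 1
        rw [heq] at hmem; exact hmem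
      · -- column i0 is 0/1 with at least two 1s : use r3
        push_neg at h2c
        have hcol01 : ∀ j, ts j i0 = 0 ∨ ts j i0 = 1 := by
          intro j
          rcases fin3_cases (ts j i0) with hx | hx | hx
          · exact Or.inl hx
          · exact Or.inr hx
          · exact absurd hx (h2c j)
        have hcard : 1 < (Finset.univ.filter (fun j => ts j i0 = 1)).card := by
          have := (hcol2 i0 hi0).2
          by_contra hle
          exact this ⟨hcol01, by omega⟩
        obtain ⟨j, hjm, k, hkm, hjk⟩ := Finset.one_lt_card.mp hcard
        simp only [Finset.mem_filter, Finset.mem_univ, true_and] at hjm hkm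
        obtain ⟨r3, hr3in, hr3v1, hr3v2, hr3v3⟩ := hr3
        have hmem := hρ 3 r3 hr3in ![Function.update b i0 0, ts j, ts k]
          (by intro jj; fin_cases jj; exacts [hd, hts j, hts k])
        apply hb
        have heq : (fun t => r3 (fun jj => (![Function.update b i0 0, ts j, ts k] :
            Fin 3 → Fin h → Fin 3) jj t)) = b := by
          funext t
          rw [col3]
          by_cases ht : t = i0
          · subst ht
            rw [Function.update_self, hjm, hkm, hi0]
            exact hr3v3
          · rw [Function.update_of_ne ht]
            rcases hb01 t ht with hbt | hbt
            · have hnotboth : ¬ (ts j t = 1 ∧ ts k t = 1) := by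
                rintro ⟨hj1, hk1⟩
                have : 1 < (Finset.univ.filter (fun jj => ts jj t = 1)).card :=
                  Finset.one_lt_card.mpr ⟨j, by simp [hj1], k, by simp [hk1], hjk⟩
                have hle1 := (hcol0 t hbt).2
                omega
              rcases (hcol0 t hbt).1 j with hcj | hcj <;>
                rcases (hcol0 t hbt).1 k with hck | hck
              · rw [hbt, hcj, hck, vec3_const]; exact hidem 3 r3 hr3in 0
              · rw [hbt, hcj, hck]; exact hr3v1
              · rw [hbt, hcj, hck]; exact hr3v2
              · exact absurd ⟨hcj, hck⟩ hnotboth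
            · rw [hbt, hcol1 t hbt j, hcol1 t hbt k, vec3_const]
              exact hidem 3 r3 hr3in 1
        rw [heq] at hmem; exact hmem
    · -- d = 1 : use p2
      have hnot1 : ∃ j, ts j i0 ≠ 1 := by
        have := (hcol2 i0 hi0).1
        push_neg at this
        exact this
      obtain ⟨j, hj⟩ := hnot1
      obtain ⟨p2, hp2in, hp2v1, hp2v2, hp2v3⟩ := hp2
      have hmem := hρ 2 p2 hp2in ![Function.update b i0 1, ts j]
        (by intro jj; fin_cases jj; exacts [hd, hts j])
      apply hb
      have heq : (fun t => p2 (fun jj => (![Function.update b i0 1, ts j] :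
          Fin 2 → Fin h → Fin 3) jj t)) = b := by
        funext t
        rw [col2]
        by_cases ht : t = i0
        · subst ht
          rw [Function.update_self, hi0]
          rcases fin3_cases (ts j t) with hx | hx | hx
          · rw [hx]; exact hp2v2
          · exact absurd hx hj
          · rw [hx]; exact hp2v3
        · rw [Function.update_of_ne ht]
          rcases hb01 t ht with hbt | hbt
          · rcases (hcol0 t hbt).1 j with hcj | hcj
            · rw [hbt, hcj, vec2_const]; exact hidem 2 p2 hp2in 0
            · rw [hbt, hcj]; exact hp2v1
          · rw [hbt, hcol1 t hbt j, vec2_const]; exact hidem 2 p2 hp2in 1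
      rw [heq] at hmem; exact hmem
    · -- d = 2 : update b i0 2 = b
      apply hb
      have : Function.update b i0 2 = b := by
        funext t
        by_cases ht : t = i0
        · subst ht; rw [Function.update_self, hi0]
        · rw [Function.update_of_ne ht]
      rw [this] at hd; exact hd
  · -- no 2 in b : pigeonhole
    push_neg at h2e
    have hb01 : ∀ i, b i = 0 ∨ b i = 1 := by
      intro i
      rcases fin3_cases (b i) with hx | hx | hx
      · exact Or.inl hx
      · exact Or.inr hx
      · exact absurd hx (h2e i)
    set Bad : Finset (Fin (n+1)) :=
      Finset.univ.filter (fun j => ∃ i, b i = 0 ∧ ts j i = 1) with hBad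
    have hcard : Bad.card ≤ h := by
      have hsub : Bad ⊆ (Finset.univ.filter (fun i : Fin h => b i = 0)).biUnion
          (fun i => Finset.univ.filter (fun j => ts j i = 1)) := by
        intro j hj
        simp only [hBad, Finset.mem_filter, Finset.mem_univ, true_and] at hj
        obtain ⟨i, h0, h1⟩ := hj
        simp only [Finset.mem_biUnion, Finset.mem_filter, Finset.mem_univ, true_and]
        exact ⟨i, h0, h1⟩
      calc Bad.card
          ≤ _ := Finset.card_le_card hsub
        _ ≤ ∑ i ∈ Finset.univ.filter (fun i : Fin h => b i = 0),
              (Finset.univ.filter (fun j => ts j i = 1)).card := Finset.card_biUnion_le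
        _ ≤ ∑ _i ∈ Finset.univ.filter (fun i : Fin h => b i = 0), 1 :=
            Finset.sum_le_sum (fun i hi =>
              (hcol0 i (by simpa using hi)).2)
        _ ≤ h := by
            rw [Finset.sum_const, smul_eq_mul, mul_one]
            exact le_trans (Finset.card_filter_le _ _) (by simp)
    have hgood : ∃ j0, j0 ∉ Bad := by
      by_contra hall
      push_neg at hall
      have : Bad = Finset.univ := Finset.eq_univ_iff_forall.mpr hall
      have hcu : Bad.card = n + 1 := by rw [this, Finset.card_univ, Fintype.card_fin]
      omega
    obtain ⟨j0, hj0⟩ := hgood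
    apply hb
    have heq : ts j0 = b := by
      funext i
      rcases hb01 i with hbi | hbi
      · rcases (hcol0 i hbi).1 j0 with hc | hc
        · rw [hc, hbi]
        · exfalso
          apply hj0
          simp only [hBad, Finset.mem_filter, Finset.mem_univ, true_and]
          exact ⟨i, hbi, hc⟩
      · rw [hcol1 i hbi j0, hbi]
    rw [← heq]
    exact hts j0
end

section
/- (NAE encoding correctness, completeness direction) Let A be a finite set and α, β ⊊ A with α ∪ β = A. Suppose x'₁,…,x'_m ∈ {0,1} are obtained from x₁,…,x_m ∈ A by: x'ᵢ = 0 if xᵢ ∈ α∖β, x'ᵢ = 1 if xᵢ ∈ β∖α, and x'ᵢ = 0 if xᵢ ∈ α∩β. If a clause x'_{i} = x'_{j} = x'_{l} holds (all three Boolean values equal), then the corresponding triple (xᵢ,xⱼ,x_l) satisfies ρ'(xᵢ,xⱼ,x_l), i.e., all three lie in α or all three lie in β. Conversely, if x₁,…,x_m ∈ A are obtained from Boolean values by choosing x'ᵢ = 0 ↦ xᵢ ∈ α∖β and x'ᵢ = 1 ↦ xᵢ ∈ β∖α, then ρ'(xᵢ,xⱼ,x_l) implies x'ᵢ = x'ⱼ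 = x'_l. -/
/-- Correctness of the NAE encoding.  With `α, β ⊊ A`, `α ∪ β = A`: (1) if Boolean
values `x', y', z'` encode `x, y, z` (`false` for `α∖β` or `α∩β`, `true` for `β∖α`)
and all three Booleans are equal, then `ρ'(x,y,z)`; (2) conversely, if `x, y, z` are
chosen from `α∖β` or `β∖α` according to the Booleans, then `ρ'(x,y,z)` forces the
three Booleans to be equal. -/
theorem nae_encoding_correct (A : Type) (α β : Set A)
    (hα : α ≠ Set.univ) (hβ : β ≠ Set.univ) (hu : α ∪ β = Set.univ) :
    (∀ (x y z : A) (x' y' z' : Bool),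
      (x ∈ α \ β → x' = false) → (x ∈ β \ α → x' = true) → (x ∈ α ∩ β → x' = false) →
      (y ∈ α \ β → y' = false) → (y ∈ β \ α → y' = true) → (y ∈ α ∩ β → y' = false) →
      (z ∈ α \ β → z' = false) → (z ∈ β \ α → z' = true) → (z ∈ α ∩ β → z' = false) →
      x' = y' → y' = z' →
      ((x ∈ α ∧ y ∈ α ∧ z ∈ α) ∨ (x ∈ β ∧ y ∈ β ∧ z ∈ β))) ∧
    (∀ (x' y' z' : Bool) (x y z : A),
      (x' = false → x ∈ α \ β) → (x' = true → x ∈ β \ α) →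
      (y' = false → y ∈ α \ β) → (y' = true → y ∈ β \ α) →
      (z' = false → z ∈ α \ β) → (z' = true → z ∈ β \ α) →
      ((x ∈ α ∧ y ∈ α ∧ z ∈ α) ∨ (x ∈ β ∧ y ∈ β ∧ z ∈ β)) →
      x' = y' ∧ y' = z') := by
  constructor
  · intro x y z x' y' z' hx1 hx2 hx3 hy1 hy2 hy3 hz1 hz2 hz3 hxy hyz
    have key : ∀ (a : A) (a' : Bool), (a ∈ α \ β → a' = false) → (a ∈ β \ α → a' = true) →
        (a ∈ α ∩ β → a' = false) → (a' = false → a ∈ α) ∧ (a' = true → a ∈ β) := by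
      intro a a' h1 h2 h3
      have ha : a ∈ α ∪ β := hu ▸ Set.mem_univ a
      by_cases hαa : a ∈ α <;> by_cases hβa : a ∈ β
      · exact ⟨fun _ => hαa, fun ht => by simp [h3 ⟨hαa, hβa⟩] at ht⟩
      · exact ⟨fun _ => hαa, fun ht => by simp [h1 ⟨hαa, hβa⟩] at ht⟩
      · exact ⟨fun hf => by simp [h2 ⟨hβa, hαa⟩] at hf, fun _ => hβa⟩
      · exact absurd ha (by simp [hαa, hβa])
    obtain ⟨kx1, kx2⟩ := key x x' hx1 hx2 hx3
    obtain ⟨ky1, ky2⟩ := key y y' hy1 hy2 hy3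
    obtain ⟨kz1, kz2⟩ := key z z' hz1 hz2 hz3
    cases x' with
    | false => exact Or.inl ⟨kx1 rfl, ky1 hxy.symm, kz1 (hxy ▸ hyz).symm⟩
    | true => exact Or.inr ⟨kx2 rfl, ky2 hxy.symm, kz2 (hxy ▸ hyz).symm⟩
  · intro x' y' z' x y z hx1 hx2 hy1 hy2 hz1 hz2 h
    cases x' <;> cases y' <;> cases z' <;> simp_all <;>
      rcases h with ⟨h1, h2, h3⟩ | ⟨h1, h2, h3⟩ <;>
      first
        | exact (hx1 rfl).2 h1 | exact (hx2 rfl).2 h1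
        | exact (hy1 rfl).2 h2 | exact (hy2 rfl).2 h2
        | exact (hz1 rfl).2 h3 | exact (hz2 rfl).2 h3
end

section
/- Let A be a finite structure of size n on domain A. Let x ∈ A be named by a constant and p > 0. If for every m ≥ 1 the adversary set Υ_{m,p,x} generates A^m (relational p-collapsibility characterization), then A has a Hubie polymorphism in {x}: taking m = p+1, the witnessing operation f for the generation (equivalently, reactive composition A^{p+1} ⊴ Υ_{p+1,p,x}) satisfies that fixing any single block of its arguments to x and ranging the rest over A is surjective onto A. -/
/-- Converse of Chen's Lemma.  Let `P` be the polymorphisms of a structure with all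
constants named (hence idempotent).  If for every `m ≥ 1` the adversary set
`Υ_{m,p,x}` generates `A^m` via a single polymorphism (equivalently, by reactive
composition `A^m ⊴ Υ_{m,p,x}`) — i.e. there is a polymorphism `f` of some arity `r`
such that every tuple `t ∈ A^m` is the coordinatewise image under `f` of tuples each
having at most `p` coordinates different from `x` — then the structure has a Hubie
polymorphism in `{x}`: an idempotent polymorphism such that fixing any single
argument to `x` and ranging the rest over `A` is surjective onto `A`. -/
theorem converse_chens_lemma (A : Type) [Fintype A] [DecidableEq A]
    (x : A) (p : ℕ) (hp : 0 < p)
    (P : (k : ℕ) → ((Fin k → A) → A) → Prop)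
    (hidem : ∀ k f, P k f → ∀ a : A, f (fun _ => a) = a)
    (hgen : ∀ m : ℕ, 1 ≤ m → ∃ (r : ℕ) (f : (Fin r → A) → A), P r f ∧
      ∀ t : Fin m → A, ∃ ts : Fin r → Fin m → A,
        (∀ j : Fin r, (Finset.univ.filter (fun i : Fin m => ts j i ≠ x)).card ≤ p) ∧
        (∀ i : Fin m, f (fun j => ts j i) = t i)) :
    ∃ (k : ℕ) (f : (Fin k → A) → A), P k f ∧ (∀ a : A, f (fun _ => a) = a) ∧
      ∀ (i : Fin k) (a : A), ∃ t : Fin k → A, t i = x ∧ f t = a := by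
  obtain ⟨r, f, hPf, hsurj⟩ := hgen (p + 1) (by omega)
  refine ⟨r, f, hPf, hidem r f hPf, ?_⟩
  intro j a
  obtain ⟨ts, h1, h2⟩ := hsurj (fun _ => a)
  have hx : ∃ i : Fin (p + 1), ts j i = x := by
    by_contra h
    push_neg at h
    have : (Finset.univ.filter (fun i : Fin (p + 1) => ts j i ≠ x)) = Finset.univ := by
      ext i; simp [h i]
    have h3 := h1 j
    rw [this, Finset.card_univ, Fintype.card_fin] at h3
    omega
  obtain ⟨i, hi⟩ := hx
  exact ⟨fun j' => ts j' i, hi, h2 i⟩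
end
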